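/- arXiv:2408.10977 — 6 statements merged into one kernel-verified Lean document; each statement's English description precedes it below -/
import Mathlib

section
/- Let q be a prime power, n,d ≥ 1, and for each i ∈ [d] fix polynomials h_i ∈ F_q[x_1,...,x_n] and exponent vectors b_i ∈ (Z^+)^n with gcd(b_{i,j}, q-1)=1 for all j. For a_i = (a_{i,1},...,a_{i,n+1}) ∈ F_q^{n+1}, define f_{a_i}(x) = Σ_{j=1}^n a_{i,j} x_j^{b_{i,j}} + a_{i,n+1}, and let V_{a_1,...,a_d} = {(x, h_1(x)+f_{a_1}(x), ..., h_d(x)+f_{a_d}(x)) : x ∈ F_q^n} ⊆ F_q^{n+d}. Then for any two distinct d-tuples (a_1,...,a_d) ≠ (ã_1,...,ã_d) in (F_q^{n+1})^d, the varieties V_{a_1,...,a_d} and V_{ã_1,...,ã_d} are distinct. -/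
/-!
Two graphs coincide only if the maps coincide, so `h i + f_{a i} = h i + f_{a' i}` pointwise and
hence `f_{a i} = f_{a' i}` as functions. Since every exponent is positive, evaluating at `0` recovers
the constant term and evaluating at the basis vector `e_j` recovers the `j`-th coefficient.
-/

theorem funext_of_setOf_forall_eq_eq {α ι β : Type*} {G G' : α → ι → β}
    (H : {p : α × (ι → β) | ∀ i, p.2 i = G p.1 i} = {p | ∀ i, p.2 i = G' p.1 i}) :
    G = G' := by
  funext x
  have hx : (x, G x) ∈ {p : α × (ι → β) | ∀ i, p.2 i = G p.1 i} := fun _ => rfl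
  rw [H] at hx
  exact funext hx

section SumPow

variable {R ι : Type*} [Semiring R] [Fintype ι] [DecidableEq ι] {b : ι → ℕ}

theorem sum_mul_pow_single_one (hb : ∀ j, 0 < b j) (c : ι → R) (j : ι) :
    ∑ k, c k * (Pi.single j 1 : ι → R) k ^ b k = c j := by
  rw [Finset.sum_eq_single j]
  · simp
  · intro k _ hkj
    simp [hkj, zero_pow (hb k).ne']
  · simp

theorem eq_of_sum_mul_pow_add_eq [IsRightCancelAdd R] (hb : ∀ j, 0 < b j) {c c' : (ι → R) × R}
    (H : ∀ x : ι → R, ∑ j, c.1 j * x j ^ b j + c.2 = ∑ j, c'.1 j * x j ^ b j + c'.2) :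
    c = c' := by
  have hconst : c.2 = c'.2 := by
    simpa [zero_pow (hb _).ne'] using H 0
  refine Prod.ext (funext fun j => ?_) hconst
  have hj := H (Pi.single j 1)
  rwa [sum_mul_pow_single_one hb, sum_mul_pow_single_one hb, hconst, add_left_inj] at hj

end SumPow

theorem stmt_1_general {F : Type*} [Field F] [Fintype F] (n d : ℕ)
    (h : Fin d → MvPolynomial (Fin n) F)
    (b : Fin d → Fin n → ℕ)
    (hb : ∀ i j, 0 < b i j ∧ Nat.Coprime (b i j) (Fintype.card F - 1))
    (a a' : Fin d → (Fin n → F) × F) (hne : a ≠ a') :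
    ({p : (Fin n → F) × (Fin d → F) | ∀ i, p.2 i =
        MvPolynomial.eval p.1 (h i) + (∑ j, (a i).1 j * p.1 j ^ (b i j)) + (a i).2} : Set _)
    ≠ {p : (Fin n → F) × (Fin d → F) | ∀ i, p.2 i =
        MvPolynomial.eval p.1 (h i) + (∑ j, (a' i).1 j * p.1 j ^ (b i j)) + (a' i).2} := by
  intro hset
  let V (c : Fin d → (Fin n → F) × F) (x : Fin n → F) (i : Fin d) : F :=
    MvPolynomial.eval x (h i) + (∑ j, (c i).1 j * x j ^ (b i j)) + (c i).2
  have hmaps : V a = V a' := funext_of_setOf_forall_eq_eq hset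
  refine hne (funext fun i => eq_of_sum_mul_pow_add_eq (fun j => (hb i j).1) fun x => ?_)
  have hx := congr_fun (congr_fun hmaps x) i
  simpa only [V, add_assoc, add_right_inj] using hx

/-- Distinct parameter tuples define distinct varieties `V_{a_1,…,a_d}`. -/
theorem stmt_1 {F : Type*} [Field F] [Fintype F] (n d : ℕ) (hn : 1 ≤ n) (hd : 1 ≤ d)
    (h : Fin d → MvPolynomial (Fin n) F)
    (hdeg : ∀ i, (h i).totalDegree ≤ Fintype.card F - 1)
    (b : Fin d → Fin n → ℕ)
    (hb : ∀ i j, 0 < b i j ∧ Nat.Coprime (b i j) (Fintype.card F - 1))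
    (a a' : Fin d → (Fin n → F) × F) (hne : a ≠ a') :
    ({p : (Fin n → F) × (Fin d → F) | ∀ i, p.2 i =
        MvPolynomial.eval p.1 (h i) + (∑ j, (a i).1 j * p.1 j ^ (b i j)) + (a i).2} : Set _)
    ≠ {p : (Fin n → F) × (Fin d → F) | ∀ i, p.2 i =
        MvPolynomial.eval p.1 (h i) + (∑ j, (a' i).1 j * p.1 j ^ (b i j)) + (a' i).2} :=
  stmt_1_general n d h b hb a a' hne
end

section
/- Let u, v ∈ F_q^{n+d} be two points, and let A_{u,v} denote the number of tuples (a_1,...,a_d) ∈ (F_q^{n+1})^d such that both u and v lie on V_{a_1,...,a_d}. Then A_{u,v} = q^{dn} if u = v; A_{u,v} = q^{d(n-1)} if the projections of u and v onto the first n coordinates differ; and A_{u,v} = 0 if u ≠ v but their first n coordinates agree. -/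
/-! For fixed `u`, the condition `u ∈ V_{a_1,…,a_d}` is, for each `i`, one linear equation in
`a_i ∈ F^{n+1}` with coefficient vector `(u_1^{b_{i,1}}, …, u_n^{b_{i,n}}, 1)`. The `a_i` decouple,
so `A_{u,v}` is a product of `d` fibre sizes of linear maps. If `u = v` there is one equation per
`i`, with `q^n` solutions. If `u_j ≠ v_j` for some `j ≤ n`, then `u_j^{b_{i,j}} ≠ v_j^{b_{i,j}}`
because `x ↦ x^b` is injective on `F` when `gcd(b, q-1) = 1`; the two equations are then
independent, with `q^{n-1}` solutions. If only the last `d` coordinates differ, the two equations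
have the same left side but different right sides. -/

open Module

theorem pow_left_injective_of_coprime_card_sub_one {M₀ : Type*} [GroupWithZero M₀] {k : ℕ}
    (hk : k ≠ 0) (hc : k.Coprime (Nat.card M₀ - 1)) :
    Function.Injective (fun x : M₀ => x ^ k) := by
  intro x y hxy
  simp only at hxy
  rcases eq_or_ne x 0 with rfl | hx
  · rw [zero_pow hk, eq_comm, pow_eq_zero_iff hk] at hxy
    exact hxy.symm
  rcases eq_or_ne y 0 with rfl | hy
  · rwa [zero_pow hk, pow_eq_zero_iff hk] at hxy
  have hunits : (Nat.card M₀ˣ).Coprime k := by rwa [Nat.card_units, Nat.coprime_comm]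
  have := (powCoprime hunits).injective (a₁ := Units.mk0 x hx) (a₂ := Units.mk0 y hy)
    (Units.ext (by simpa using hxy))
  simpa using congrArg Units.val this

theorem LinearMap.natCard_setOf_apply_eq_of_surjective {K V W : Type*} [Field K]
    [AddCommGroup V] [Module K V] [FiniteDimensional K V]
    [AddCommGroup W] [Module K W] [FiniteDimensional K W]
    (f : V →ₗ[K] W) (hf : Function.Surjective f) (w : W) :
    Nat.card {v | f v = w} = Nat.card K ^ (finrank K V - finrank K W) := by
  obtain ⟨v₀, rfl⟩ := hf w
  have hfiber : {v | f v = f v₀} ≃ LinearMap.ker f :=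
    (Equiv.subRight v₀).subtypeEquiv fun v => by simp [sub_eq_zero]
  have hrank := f.finrank_range_add_finrank_ker
  rw [LinearMap.range_eq_top.mpr hf, finrank_top] at hrank
  rw [Nat.card_congr hfiber, Module.natCard_eq_pow_finrank (K := K)]
  congr 1
  omega

theorem Nat.card_setOf_forall {ι α : Type*} [Fintype ι] (P : ι → α → Prop) :
    Nat.card {a : ι → α | ∀ i, P i (a i)} = ∏ i, Nat.card {x | P i x} := by
  rw [← Nat.card_pi]
  exact Nat.card_congr (Equiv.subtypePiEquivPi (p := P))

section ParamEval

variable {K : Type*} [Field K] {n : ℕ}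

/-- For a point `x` with `g j = x_j ^ b_j`, `paramEval g a` is `f_a(x)`, seen as a linear
function of the parameter `a = ((a_1, …, a_n), a_{n+1})`. -/
def paramEval (g : Fin n → K) : ((Fin n → K) × K) →ₗ[K] K :=
  (Fintype.linearCombination K g).coprod LinearMap.id

theorem paramEval_apply (g : Fin n → K) (a : (Fin n → K) × K) :
    paramEval g a = (∑ j, a.1 j * g j) + a.2 := by
  simp [paramEval, Fintype.linearCombination_apply]

theorem eq_add_paramEval_iff (g : Fin n → K) (a : (Fin n → K) × K) (y c : K) :
    y = c + (∑ j, a.1 j * g j) + a.2 ↔ paramEval g a = y - c := by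
  rw [paramEval_apply, eq_sub_iff_add_eq', ← add_assoc, eq_comm]

theorem paramEval_surjective (g : Fin n → K) : Function.Surjective (paramEval g) :=
  fun r => ⟨(0, r), by simp [paramEval_apply]⟩

theorem paramEval_prod_surjective {g₁ g₂ : Fin n → K} (hg : g₁ ≠ g₂) :
    Function.Surjective ((paramEval g₁).prod (paramEval g₂)) := by
  rintro ⟨r₁, r₂⟩
  obtain ⟨j, hj⟩ := Function.ne_iff.mp hg
  have hsub : g₁ j - g₂ j ≠ 0 := sub_ne_zero.mpr hj
  set t := (r₁ - r₂) / (g₁ j - g₂ j)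
  have ht : t * (g₁ j - g₂ j) = r₁ - r₂ := div_mul_cancel₀ _ hsub
  refine ⟨(Pi.single j t, r₁ - t * g₁ j), Prod.ext ?_ ?_⟩ <;>
    simp only [LinearMap.prod_apply, Function.prod_apply, paramEval_apply, Pi.single_apply,
      ite_mul, zero_mul, Finset.sum_ite_eq', Finset.mem_univ, if_true]
  · ring
  · linear_combination -ht

theorem natCard_setOf_paramEval_eq (g : Fin n → K) (r : K) :
    Nat.card {a | paramEval g a = r} = Nat.card K ^ n := by
  rw [LinearMap.natCard_setOf_apply_eq_of_surjective _ (paramEval_surjective g)]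
  simp

theorem natCard_setOf_paramEval_eq_and_eq {g₁ g₂ : Fin n → K} (hg : g₁ ≠ g₂)
    (r₁ r₂ : K) :
    Nat.card {a | paramEval g₁ a = r₁ ∧ paramEval g₂ a = r₂} = Nat.card K ^ (n - 1) := by
  have := LinearMap.natCard_setOf_apply_eq_of_surjective _ (paramEval_prod_surjective hg) (r₁, r₂)
  simp only [LinearMap.prod_apply, Function.prod_apply, Prod.mk.injEq] at this
  rw [this]
  simp

end ParamEval

theorem stmt_3_general {F : Type*} [Field F] [Fintype F] (n d : ℕ)
    (h : Fin d → MvPolynomial (Fin n) F)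
    (b : Fin d → Fin n → ℕ)
    (hb : ∀ i j, 0 < b i j ∧ Nat.Coprime (b i j) (Fintype.card F - 1))
    (u v : (Fin n → F) × (Fin d → F)) :
    (u = v →
      Nat.card {a : Fin d → (Fin n → F) × F |
          (∀ i, u.2 i = MvPolynomial.eval u.1 (h i) + (∑ j, (a i).1 j * u.1 j ^ (b i j)) + (a i).2) ∧
          (∀ i, v.2 i = MvPolynomial.eval v.1 (h i) + (∑ j, (a i).1 j * v.1 j ^ (b i j)) + (a i).2)}
        = Fintype.card F ^ (d * n)) ∧
    (u.1 ≠ v.1 →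
      Nat.card {a : Fin d → (Fin n → F) × F |
          (∀ i, u.2 i = MvPolynomial.eval u.1 (h i) + (∑ j, (a i).1 j * u.1 j ^ (b i j)) + (a i).2) ∧
          (∀ i, v.2 i = MvPolynomial.eval v.1 (h i) + (∑ j, (a i).1 j * v.1 j ^ (b i j)) + (a i).2)}
        = Fintype.card F ^ (d * (n - 1))) ∧
    (u ≠ v → u.1 = v.1 →
      Nat.card {a : Fin d → (Fin n → F) × F |
          (∀ i, u.2 i = MvPolynomial.eval u.1 (h i) + (∑ j, (a i).1 j * u.1 j ^ (b i j)) + (a i).2) ∧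
          (∀ i, v.2 i = MvPolynomial.eval v.1 (h i) + (∑ j, (a i).1 j * v.1 j ^ (b i j)) + (a i).2)}
        = 0) := by
  simp only [eq_add_paramEval_iff, ← forall_and, ← Nat.card_eq_fintype_card]
  refine ⟨?_, ?_, ?_⟩
  · rintro rfl
    simp only [and_self]
    rw [Nat.card_setOf_forall fun i x => _ = _]
    simp only [natCard_setOf_paramEval_eq, Finset.prod_const, Finset.card_univ,
      Fintype.card_fin, ← pow_mul, mul_comm n]
  · intro hne
    obtain ⟨j, hj⟩ := Function.ne_iff.mp hne
    have hpow : ∀ i, (fun j => u.1 j ^ b i j) ≠ fun j => v.1 j ^ b i j := fun i heq =>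
      hj (pow_left_injective_of_coprime_card_sub_one (hb i j).1.ne'
        (Nat.card_eq_fintype_card (α := F) ▸ (hb i j).2) (congrFun heq j))
    rw [Nat.card_setOf_forall fun i x => _ = _ ∧ _ = _]
    simp only [natCard_setOf_paramEval_eq_and_eq (hpow _), Finset.prod_const, Finset.card_univ,
      Fintype.card_fin, ← pow_mul, mul_comm (n - 1)]
  · intro hne h₁
    obtain ⟨i, hi⟩ : ∃ i, u.2 i ≠ v.2 i := by
      by_contra! h₂
      exact hne (Prod.ext h₁ (funext h₂))
    rw [Nat.card_eq_zero]
    refine .inl ⟨?_⟩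
    rintro ⟨a, ha⟩
    obtain ⟨hu, hv⟩ := ha i
    rw [h₁] at hu
    exact hi (sub_left_injective (hu.symm.trans hv))

/-- The number `A_{u,v}` of parameter tuples `(a_1,…,a_d)` whose variety contains both
`u` and `v` is `q^{dn}` if `u = v`, `q^{d(n-1)}` if `u|_{[n]} ≠ v|_{[n]}`, and `0`
if `u ≠ v` but `u|_{[n]} = v|_{[n]}`. -/
theorem stmt_3 {F : Type*} [Field F] [Fintype F] (n d : ℕ) (hn : 1 ≤ n) (hd : 1 ≤ d)
    (h : Fin d → MvPolynomial (Fin n) F)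
    (hdeg : ∀ i, (h i).totalDegree ≤ Fintype.card F - 1)
    (b : Fin d → Fin n → ℕ)
    (hb : ∀ i j, 0 < b i j ∧ Nat.Coprime (b i j) (Fintype.card F - 1))
    (u v : (Fin n → F) × (Fin d → F)) :
    (u = v →
      Nat.card {a : Fin d → (Fin n → F) × F |
          (∀ i, u.2 i = MvPolynomial.eval u.1 (h i) + (∑ j, (a i).1 j * u.1 j ^ (b i j)) + (a i).2) ∧
          (∀ i, v.2 i = MvPolynomial.eval v.1 (h i) + (∑ j, (a i).1 j * v.1 j ^ (b i j)) + (a i).2)}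
        = Fintype.card F ^ (d * n)) ∧
    (u.1 ≠ v.1 →
      Nat.card {a : Fin d → (Fin n → F) × F |
          (∀ i, u.2 i = MvPolynomial.eval u.1 (h i) + (∑ j, (a i).1 j * u.1 j ^ (b i j)) + (a i).2) ∧
          (∀ i, v.2 i = MvPolynomial.eval v.1 (h i) + (∑ j, (a i).1 j * v.1 j ^ (b i j)) + (a i).2)}
        = Fintype.card F ^ (d * (n - 1))) ∧
    (u ≠ v → u.1 = v.1 →
      Nat.card {a : Fin d → (Fin n → F) × F |
          (∀ i, u.2 i = MvPolynomial.eval u.1 (h i) + (∑ j, (a i).1 j * u.1 j ^ (b i j)) + (a i).2) ∧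
          (∀ i, v.2 i = MvPolynomial.eval v.1 (h i) + (∑ j, (a i).1 j * v.1 j ^ (b i j)) + (a i).2)}
        = 0) :=
  stmt_3_general n d h b hb u v
end

section
/- Fix (a_1,...,a_d) ∈ (F_q^{n+1})^d. The sum λ = Σ_{y ∈ F_q^n} Π_{i=1}^d Γ_i(y), where Γ_i(y) = Σ_{ã ∈ F_q^{n+1}, ⟨ã,(y,1)⟩=0} e(Tr(⟨a_i,ã⟩)), equals q^{(d+1)n} if all a_i = 0; equals q^{dn} if there exist y ∈ F_q^n and (c_1,...,c_d) ∈ F_q^d \ {0} with a_i = c_i(y,1) for all i; and equals 0 otherwise. -/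
/-!
Parametrise the hyperplane `⟨t, (y,1)⟩ = 0` by its first `n` coordinates `u`. On it the phase
`⟨a_i, t⟩` becomes the linear form `u ↦ ⟨a_i' - a_i'' y, u⟩` (where `a_i = (a_i', a_i'')`), so
orthogonality of the nontrivial character `e ∘ Tr` gives `Γ_i(y) = q^n` if `a_i` is a multiple
of `(y,1)` and `Γ_i(y) = 0` otherwise. Hence `λ` is `q^{dn}` times the number of `y` for which
every `a_i` is a multiple of `(y,1)`: all `q^n` of them if `a = 0`, exactly one if `a` is a
nonzero multiple of some `(y,1)`, and none otherwise.
-/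

open Finset

section CharacterSums

variable {F R ι : Type*} [Field F] [Fintype F] [DecidableEq F] [CommRing R] [IsDomain R]
  [Fintype ι] [DecidableEq ι]

theorem AddChar.sum_apply_dotProduct {ψ : AddChar F R} (hψ : ψ ≠ 1) (b : ι → F) :
    ∑ u : ι → F, ψ (b ⬝ᵥ u) = if b = 0 then (Fintype.card F : R) ^ Fintype.card ι else 0 := by
  split_ifs with hb
  · simp [hb]
  obtain ⟨j, hj⟩ := Function.ne_iff.mp hb
  obtain ⟨x, hx⟩ := AddChar.ne_one_iff.1 hψ
  let φ : AddChar (ι → F) R := ψ.compAddMonoidHom (AddMonoidHom.mk' (b ⬝ᵥ ·) (dotProduct_add b))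
  refine AddChar.sum_eq_zero_of_ne_one (ψ := φ) (AddChar.ne_one_iff.2 ⟨Pi.single j (x / b j), ?_⟩)
  simpa [φ, dotProduct_single, mul_div_cancel₀ _ hj] using hx

theorem AddChar.sum_apply_on_hyperplane {ψ : AddChar F R} (hψ : ψ ≠ 1) (v : (ι → F) × F)
    (y : ι → F) :
    ∑ t ∈ univ.filter (fun t : (ι → F) × F => t.1 ⬝ᵥ y + t.2 = 0), ψ (v.1 ⬝ᵥ t.1 + v.2 * t.2) =
      if v.1 = v.2 • y then (Fintype.card F : R) ^ Fintype.card ι else 0 := by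
  have hlin : ∀ u : ι → F, v.1 ⬝ᵥ u + v.2 * -(u ⬝ᵥ y) = (v.1 - v.2 • y) ⬝ᵥ u := fun u => by
    rw [sub_dotProduct, smul_dotProduct, dotProduct_comm u, smul_eq_mul, mul_neg, sub_eq_add_neg]
  simp_rw [sum_filter, Fintype.sum_prod_type, add_eq_zero_iff_eq_neg', sum_ite_eq', mem_univ,
    if_true, hlin, AddChar.sum_apply_dotProduct hψ, sub_eq_zero]

end CharacterSums

theorem ZMod.stdAddChar_comp_trace_ne_one (p : ℕ) [Fact p.Prime] (F : Type*) [Field F] [Finite F]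
    [Algebra (ZMod p) F] :
    (ZMod.stdAddChar (N := p)).compAddMonoidHom (Algebra.trace (ZMod p) F).toAddMonoidHom ≠ 1 := by
  obtain ⟨x, hx⟩ := Algebra.trace_surjective (ZMod p) F 1
  refine AddChar.ne_one_iff.2 ⟨x, ?_⟩
  rw [AddChar.compAddMonoidHom_apply, LinearMap.toAddMonoidHom_coe, hx,
    ← (ZMod.stdAddChar (N := p)).map_zero_eq_one, ZMod.injective_stdAddChar.ne_iff]
  exact one_ne_zero

section Proportionality

variable {K M ι : Type*} [DivisionRing K] [AddCommGroup M] [Module K M]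

theorem forall_fst_eq_snd_smul_iff {a : ι → M × K} {c : ι → K} (hc : c ≠ 0) {y₀ : M}
    (ha : ∀ i, a i = (c i • y₀, c i)) (y : M) :
    (∀ i, (a i).1 = (a i).2 • y) ↔ y = y₀ := by
  obtain ⟨j, hj⟩ := Function.ne_iff.mp hc
  simp only [ha]
  refine ⟨fun h => smul_right_injective M hj (h j).symm, ?_⟩
  rintro rfl _
  rfl

theorem eq_zero_or_exists_eq_smul_of_forall_fst_eq_snd_smul {a : ι → M × K} {y : M}
    (h : ∀ i, (a i).1 = (a i).2 • y) :
    (∀ i, a i = 0) ∨ ∃ c : ι → K, c ≠ 0 ∧ ∀ i, a i = (c i • y, c i) := by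
  by_cases hc : (fun i => (a i).2) = 0
  · left
    intro i
    have hi : (a i).2 = 0 := congrFun hc i
    exact Prod.ext (by rw [h i, hi, zero_smul]; rfl) hi
  · exact Or.inr ⟨_, hc, fun i => Prod.ext (h i) rfl⟩

end Proportionality

theorem stmt_10_general (p : ℕ) [Fact p.Prime] {F : Type*} [Field F] [Fintype F] [DecidableEq F]
    [Algebra (ZMod p) F] (n d : ℕ)
    (e : ZMod p → ℂ) (he : ∀ x : ZMod p, e x = Complex.exp (2 * Real.pi * Complex.I * x.val / p))
    (a : Fin d → (Fin n → F) × F)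
    (Γ : Fin d → (Fin n → F) → ℂ)
    (hΓ : ∀ i y, Γ i y =
      ∑ t ∈ Finset.univ.filter
          (fun t : (Fin n → F) × F => (∑ j, t.1 j * y j) + t.2 = 0),
        e (Algebra.trace (ZMod p) F ((∑ j, (a i).1 j * t.1 j) + (a i).2 * t.2))) :
    ((∀ i, a i = 0) →
      ∑ y : Fin n → F, ∏ i, Γ i y = (Fintype.card F : ℂ) ^ ((d + 1) * n)) ∧
    ((∃ (y : Fin n → F) (c : Fin d → F), c ≠ 0 ∧ ∀ i, a i = (c i • y, c i)) →
      ∑ y : Fin n → F, ∏ i, Γ i y = (Fintype.card F : ℂ) ^ (d * n)) ∧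
    (¬ (∀ i, a i = 0) →
      ¬ (∃ (y : Fin n → F) (c : Fin d → F), c ≠ 0 ∧ ∀ i, a i = (c i • y, c i)) →
      ∑ y : Fin n → F, ∏ i, Γ i y = 0) := by
  have hΓ_ite : ∀ i y, Γ i y = if (a i).1 = (a i).2 • y then (Fintype.card F : ℂ) ^ n else 0 := by
    intro i y
    rw [hΓ]
    refine (sum_congr rfl fun t _ => ?_).trans
      ((AddChar.sum_apply_on_hyperplane (ZMod.stdAddChar_comp_trace_ne_one p F) (a i) y).trans
        (by rw [Fintype.card_fin]))
    rw [he, AddChar.compAddMonoidHom_apply, LinearMap.toAddMonoidHom_coe, ZMod.stdAddChar_apply,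
      ZMod.toCircle_apply]
    rfl
  have hsum : ∑ y : Fin n → F, ∏ i, Γ i y = ∑ y : Fin n → F,
      if ∀ i, (a i).1 = (a i).2 • y then (Fintype.card F : ℂ) ^ (d * n) else 0 := by
    simp_rw [hΓ_ite, Fintype.prod_ite_zero, prod_const, card_univ, Fintype.card_fin, ← pow_mul,
      mul_comm n]
  refine ⟨fun h0 => ?_, fun ⟨y₀, c, hc, ha⟩ => ?_, fun h0 hprop => ?_⟩
  · simp [hsum, h0, ← pow_add, add_mul, add_comm]
  · simp [hsum, forall_fst_eq_snd_smul_iff hc ha]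
  · refine hsum.trans (sum_eq_zero fun y _ => if_neg fun hy => ?_)
    rcases eq_zero_or_exists_eq_smul_of_forall_fst_eq_snd_smul hy with h | ⟨c, hc, ha⟩
    · exact h0 h
    · exact hprop ⟨y, c, hc, ha⟩

/-- For a fixed tuple `(a_1,…,a_d)`, the sum `λ = Σ_y Π_i Γ_i(y)` equals `q^{(d+1)n}`
if all `a_i = 0`; equals `q^{dn}` if `a_i = c_i(y,1)` for some `y` and some nonzero
`(c_1,…,c_d)`; and equals `0` otherwise. -/
theorem stmt_10 (p : ℕ) [Fact p.Prime] {F : Type*} [Field F] [Fintype F] [DecidableEq F]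
    [Algebra (ZMod p) F] (n d : ℕ) (hn : 1 ≤ n) (hd : 1 ≤ d)
    (e : ZMod p → ℂ) (he : ∀ x : ZMod p, e x = Complex.exp (2 * Real.pi * Complex.I * x.val / p))
    (a : Fin d → (Fin n → F) × F)
    (Γ : Fin d → (Fin n → F) → ℂ)
    (hΓ : ∀ i y, Γ i y =
      ∑ t ∈ Finset.univ.filter
          (fun t : (Fin n → F) × F => (∑ j, t.1 j * y j) + t.2 = 0),
        e (Algebra.trace (ZMod p) F ((∑ j, (a i).1 j * t.1 j) + (a i).2 * t.2))) :
    ((∀ i, a i = 0) →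
      ∑ y : Fin n → F, ∏ i, Γ i y = (Fintype.card F : ℂ) ^ ((d + 1) * n)) ∧
    ((∃ (y : Fin n → F) (c : Fin d → F), c ≠ 0 ∧ ∀ i, a i = (c i • y, c i)) →
      ∑ y : Fin n → F, ∏ i, Γ i y = (Fintype.card F : ℂ) ^ (d * n)) ∧
    (¬ (∀ i, a i = 0) →
      ¬ (∃ (y : Fin n → F) (c : Fin d → F), c ≠ 0 ∧ ∀ i, a i = (c i • y, c i)) →
      ∑ y : Fin n → F, ∏ i, Γ i y = 0) :=
  stmt_10_general p n d e he a Γ hΓ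
end

section
/- Let V ⊆ (F_q^{n+1})^d be a set of d-tuples (each representing a variety). Then the squared norm of the projection of the indicator vector 1_V onto the span of the normalized characters χ_{(y,c)}/q^{d(n+1)/2}, where χ_{(y,c)} = χ_{a_1,...,a_d} with a_i = c_i(y,1), over all y ∈ F_q^n and c ∈ F_q^d \ {0}, is at most (|V|/q^{(d-1)n}) · (1 − 1/q + |V|(q^{d-1}−1)/q^d). -/
/-!
Write `ψ = e ∘ Tr`, a primitive additive character of `F_q`, and `L_a(y) ∈ F_q^d` for the
vector of values `⟨a_i, (y, 1)⟩`, so that `χ_{(y,c)}(a) = ψ(⟨c, L_a(y)⟩)`. Expanding the square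
and summing over all `c ∈ F_q^d`, orthogonality of `ψ` gives `q^d` times the number of pairs
`(a, b) ∈ V²` with `L_a(y) = L_b(y)`; the term `c = 0` contributes `|V|²`. Summed over `y`, a
diagonal pair is counted `q^n` times, while for `a ≠ b` some coordinate `L_a(y)_i = L_b(y)_i`
is a nontrivial affine equation in `y`, with at most `q^(n-1)` solutions.
-/

open Finset Matrix

namespace AddChar

variable {ι : Type*}

lemma map_sum_eq_prod {A M : Type*} [AddCommMonoid A] [CommMonoid M] (ψ : AddChar A M)
    (s : Finset ι) (f : ι → A) : ψ (∑ i ∈ s, f i) = ∏ i ∈ s, ψ (f i) := by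
  induction s using Finset.cons_induction with
  | empty => simp
  | cons a s ha ih => rw [sum_cons, prod_cons, map_add_eq_mul, ih]

variable {R : Type*} [CommRing R] [Fintype R] [DecidableEq R] [Fintype ι] [DecidableEq ι]

lemma sum_apply_dotProduct_s11 {R' : Type*} [CommRing R'] [IsDomain R'] {ψ : AddChar R R'}
    (hψ : ψ.IsPrimitive) (v : ι → R) :
    ∑ c : ι → R, ψ (c ⬝ᵥ v)
      = if v = 0 then (Fintype.card R : R') ^ Fintype.card ι else 0 := by
  simp_rw [dotProduct, map_sum_eq_prod, ← Fintype.prod_sum (fun i x => ψ (x * v i)),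
    sum_mulShift _ hψ]
  split_ifs with hv
  · simp [hv]
  · obtain ⟨i, hi⟩ := Function.ne_iff.mp hv
    exact prod_eq_zero (mem_univ i) (by simp [show v i ≠ 0 from hi])

lemma sum_norm_sum_apply_dotProduct_sq {α : Type*} {ψ : AddChar R ℂ} (hψ : ψ.IsPrimitive)
    (s : Finset α) (w : α → ι → R) :
    ∑ c : ι → R, ‖∑ a ∈ s, ψ (c ⬝ᵥ w a)‖ ^ 2
      = (Fintype.card R : ℝ) ^ Fintype.card ι * #{x ∈ s ×ˢ s | w x.1 = w x.2} := by
  simp_rw [natCast_card_filter, sum_product, mul_sum, mul_boole]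
  apply Complex.ofReal_injective
  have hsq (z : ℂ) : ((‖z‖ ^ 2 : ℝ) : ℂ) = z * (starRingEnd ℂ) z := by
    rw [Complex.mul_conj, Complex.normSq_eq_norm_sq]
  simp_rw [Complex.ofReal_sum, hsq, map_sum, ← map_neg_eq_conj, sum_mul_sum, ← map_add_eq_mul,
    ← dotProduct_neg, ← dotProduct_add]
  rw [sum_comm]
  simp_rw [sum_comm (s := univ), sum_apply_dotProduct_s11 hψ, add_neg_eq_zero]
  simp [apply_ite Complex.ofReal]

lemma sum_filter_ne_zero_norm_sum_apply_dotProduct_sq {α : Type*} {ψ : AddChar R ℂ}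
    (hψ : ψ.IsPrimitive) (s : Finset α) (w : α → ι → R) :
    ∑ c ∈ univ.filter (· ≠ 0), ‖∑ a ∈ s, ψ (c ⬝ᵥ w a)‖ ^ 2
      = (Fintype.card R : ℝ) ^ Fintype.card ι * #{x ∈ s ×ˢ s | w x.1 = w x.2} - #s ^ 2 := by
  rw [filter_ne', sum_erase_eq_sub (mem_univ 0), sum_norm_sum_apply_dotProduct_sq hψ]
  simp

end AddChar

section TraceChar

variable (p : ℕ) [Fact p.Prime] (F : Type*) [Field F] [Algebra (ZMod p) F]

noncomputable def traceAddChar : AddChar F ℂ :=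
  ZMod.stdAddChar.compAddMonoidHom (Algebra.trace (ZMod p) F).toAddMonoidHom

lemma traceAddChar_apply (x : F) :
    traceAddChar p F x
      = Complex.exp (2 * Real.pi * Complex.I * (Algebra.trace (ZMod p) F x).val / p) := by
  rw [traceAddChar, AddChar.compAddMonoidHom_apply, ZMod.stdAddChar_apply, ZMod.toCircle_apply]
  rfl

lemma isPrimitive_traceAddChar [Finite F] : (traceAddChar p F).IsPrimitive := by
  refine AddChar.IsPrimitive.of_ne_one (AddChar.ne_one_iff.2 ?_)
  obtain ⟨x, hx⟩ : ∃ x : F, Algebra.trace (ZMod p) F x ≠ 0 := by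
    by_contra! h
    exact one_ne_zero <| (traceForm_nondegenerate (ZMod p) F).1 1 fun x => by simpa using h x
  refine ⟨x, fun h => hx ?_⟩
  rwa [traceAddChar, AddChar.compAddMonoidHom_apply,
    ← AddChar.map_zero_eq_one (ZMod.stdAddChar (N := p)), ZMod.injective_stdAddChar.eq_iff] at h

end TraceChar

section AffineForms

variable {F ι κ : Type*} [Field F] [Fintype F] [DecidableEq F] [Fintype κ] [DecidableEq κ]

lemma card_mul_card_filter_dotProduct_add_eq_zero_le {u : κ → F} {t : F} (hut : (u, t) ≠ 0) :
    Fintype.card F * #{y | y ⬝ᵥ u + t = 0} ≤ Fintype.card F ^ Fintype.card κ := by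
  by_cases hu : u = 0
  · have ht : t ≠ 0 := fun ht => hut (by simp [hu, ht])
    simp [hu, ht]
  obtain ⟨j, hj⟩ := Function.ne_iff.mp hu
  set w : κ → F := Pi.single j (u j)⁻¹
  have hwu : w ⬝ᵥ u = 1 := by simp [w, single_dotProduct, inv_mul_cancel₀ hj]
  -- `(s, y) ↦ y + s • w` is injective on `F × {y | y ⬝ᵥ u + t = 0}`: since `w ⬝ᵥ u = 1`,
  -- `s` is the value of the affine form at the image.
  calc Fintype.card F * #{y | y ⬝ᵥ u + t = 0}
        = #((univ : Finset F) ×ˢ ({y | y ⬝ᵥ u + t = 0} : Finset (κ → F))) := by simp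
    _ ≤ #(univ : Finset (κ → F)) := by
        refine card_le_card_of_injOn (fun x => x.2 + x.1 • w)
          (fun _ _ => mem_coe.2 (mem_univ _)) ?_
        rintro ⟨s, y⟩ hy ⟨s', y'⟩ hy' h
        simp only [coe_product, coe_filter, coe_univ, Set.mem_prod, Set.mem_univ,
          Set.mem_ofPred_eq, mem_univ, true_and] at hy hy' h
        have hs : s = s' := by
          have := congrArg (· ⬝ᵥ u) h
          simp only [add_dotProduct, smul_dotProduct, hwu, smul_eq_mul, mul_one] at this
          linear_combination this - hy + hy'
        subst hs
        simp_all
    _ = Fintype.card F ^ Fintype.card κ := by simp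

variable [Fintype ι]

/-- `a i = (u, t)` stands for the vector `a_i = (u, t) ∈ F^(n+1)`, so that
`evalAffine a y i = ⟨a_i, (y, 1)⟩`. -/
def evalAffine (a : ι → (κ → F) × F) (y : κ → F) : ι → F :=
  fun i => y ⬝ᵥ (a i).1 + (a i).2

lemma card_mul_card_filter_evalAffine_eq_le {a b : ι → (κ → F) × F} (hab : a ≠ b) :
    Fintype.card F * #{y | evalAffine a y = evalAffine b y}
      ≤ Fintype.card F ^ Fintype.card κ := by
  obtain ⟨i, hi⟩ := Function.ne_iff.mp hab
  refine le_trans (Nat.mul_le_mul_left _ (card_le_card fun y hy => ?_))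
    (card_mul_card_filter_dotProduct_add_eq_zero_le (u := (a i).1 - (b i).1)
      (t := (a i).2 - (b i).2) (by simpa [sub_eq_zero, Prod.ext_iff] using hi))
  simp only [mem_filter, mem_univ, true_and, funext_iff, evalAffine] at hy ⊢
  rw [dotProduct_sub]
  linear_combination hy i

lemma card_mul_sum_card_filter_evalAffine_eq_le (V : Finset (ι → (κ → F) × F)) :
    (Fintype.card F : ℝ)
        * ∑ y : κ → F, #{x ∈ V ×ˢ V | evalAffine x.1 y = evalAffine x.2 y}
      ≤ #V * Fintype.card F ^ (Fintype.card κ + 1)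
        + #V * (#V - 1) * Fintype.card F ^ Fintype.card κ := by
  set q : ℝ := (Fintype.card F : ℝ) with hq
  have hdiag (a : ι → (κ → F) × F) :
      q * #{y | evalAffine a y = evalAffine a y} = q ^ (Fintype.card κ + 1) := by
    simp [q, pow_succ, mul_comm]
  have hoff {a b : ι → (κ → F) × F} (hab : a ≠ b) :
      q * #{y | evalAffine a y = evalAffine b y} ≤ q ^ Fintype.card κ := by
    rw [hq]
    exact_mod_cast card_mul_card_filter_evalAffine_eq_le hab
  have hrow {a : ι → (κ → F) × F} (ha : a ∈ V) :
      q * ∑ b ∈ V, (#{y | evalAffine a y = evalAffine b y} : ℝ)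
        ≤ q ^ (Fintype.card κ + 1) + (#V - 1) * q ^ Fintype.card κ := by
    rw [← add_sum_erase _ _ ha, mul_add, hdiag, mul_sum, ← cast_card_erase_of_mem ha,
      ← nsmul_eq_mul, ← sum_const]
    gcongr with b hb
    exact hoff (ne_of_mem_erase hb).symm
  calc q * ((∑ y : κ → F, #{x ∈ V ×ˢ V | evalAffine x.1 y = evalAffine x.2 y} : ℕ) : ℝ)
      = ∑ a ∈ V, q * ∑ b ∈ V, (#{y | evalAffine a y = evalAffine b y} : ℝ) := by
        simp only [card_filter, Nat.cast_sum, Nat.cast_ite, Nat.cast_one, Nat.cast_zero, mul_sum]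
        rw [sum_comm, sum_product]
    _ ≤ ∑ _a ∈ V, (q ^ (Fintype.card κ + 1) + (#V - 1) * q ^ Fintype.card κ) :=
        sum_le_sum fun _ ha => hrow ha
    _ = #V * q ^ (Fintype.card κ + 1) + #V * (#V - 1) * q ^ Fintype.card κ := by
        rw [sum_const, nsmul_eq_mul]
        ring

end AffineForms

theorem stmt_11_general (p : ℕ) [Fact p.Prime] {F : Type*} [Field F] [Fintype F] [DecidableEq F]
    [Algebra (ZMod p) F] (n d : ℕ) (hd : 1 ≤ d)
    (e : ZMod p → ℂ) (he : ∀ x : ZMod p, e x = Complex.exp (2 * Real.pi * Complex.I * x.val / p))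
    (χ : (Fin n → F) → (Fin d → F) → (Fin d → (Fin n → F) × F) → ℂ)
    (hχ : ∀ y c a, χ y c a =
      e (Algebra.trace (ZMod p) F (∑ i, c i * ((∑ j, y j * (a i).1 j) + (a i).2))))
    (V : Finset (Fin d → (Fin n → F) × F)) :
    ∑ y : Fin n → F, ∑ c ∈ Finset.univ.filter (fun c : Fin d → F => c ≠ 0),
        ‖∑ a ∈ V, (starRingEnd ℂ) (χ y c a)‖ ^ 2 / (Fintype.card F : ℝ) ^ (d * (n + 1))
      ≤ (V.card / (Fintype.card F : ℝ) ^ ((d - 1) * n)) *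
          (1 - 1 / (Fintype.card F : ℝ)
            + V.card * ((Fintype.card F : ℝ) ^ (d - 1) - 1) / (Fintype.card F : ℝ) ^ d) := by
  have hχψ (y c a) : χ y c a = traceAddChar p F (c ⬝ᵥ evalAffine a y) := by
    rw [hχ, he, traceAddChar_apply]
    rfl
  have hy (y : Fin n → F) :
      ∑ c ∈ univ.filter (fun c : Fin d → F => c ≠ 0),
          ‖∑ a ∈ V, (starRingEnd ℂ) (χ y c a)‖ ^ 2
        = (Fintype.card F : ℝ) ^ d * #{x ∈ V ×ˢ V | evalAffine x.1 y = evalAffine x.2 y}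
          - #V ^ 2 := by
    simp_rw [← map_sum, Complex.norm_conj, hχψ]
    simpa using AddChar.sum_filter_ne_zero_norm_sum_apply_dotProduct_sq
      (isPrimitive_traceAddChar p F) V (fun a => evalAffine a y)
  simp_rw [← sum_div, hy, sum_sub_distrib, ← mul_sum, sum_const, card_univ, Fintype.card_fun,
    Fintype.card_fin, nsmul_eq_mul]
  have hpairs := card_mul_sum_card_filter_evalAffine_eq_le V
  rw [Fintype.card_fin] at hpairs
  push_cast at hpairs ⊢
  set q : ℝ := (Fintype.card F : ℝ)
  set S : ℝ :=
    ∑ y : Fin n → F, (#{x ∈ V ×ˢ V | evalAffine x.1 y = evalAffine x.2 y} : ℝ)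
  set v : ℝ := (#V : ℝ)
  have hq : 0 < q := by positivity
  obtain ⟨k, rfl⟩ : ∃ k, d = k + 1 := ⟨d - 1, by omega⟩
  calc (q ^ (k + 1) * S - q ^ n * v ^ 2) / q ^ ((k + 1) * (n + 1))
      = (q ^ (k + 1) * (q * S) - q ^ (n + 1) * v ^ 2) / q ^ ((k + 1) * (n + 1) + 1) := by
        field_simp
        ring
    _ ≤ (q ^ (k + 1) * (v * q ^ (n + 1) + v * (v - 1) * q ^ n) - q ^ (n + 1) * v ^ 2)
          / q ^ ((k + 1) * (n + 1) + 1) := by gcongr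
    _ = _ := by
        rw [Nat.add_sub_cancel]
        field_simp
        ring

/-- The squared norm of the projection of the indicator vector of a set `V` of parameter
tuples onto the span of the normalized characters `χ_{(y,c)}/q^{d(n+1)/2}`, over all
`y ∈ F_q^n` and `c ∈ F_q^d \ {0}`, is at most
`(|V|/q^{(d-1)n})(1 − 1/q + |V|(q^{d-1}−1)/q^d)`. -/
theorem stmt_11 (p : ℕ) [Fact p.Prime] {F : Type*} [Field F] [Fintype F] [DecidableEq F]
    [Algebra (ZMod p) F] (n d : ℕ) (hn : 1 ≤ n) (hd : 1 ≤ d)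
    (e : ZMod p → ℂ) (he : ∀ x : ZMod p, e x = Complex.exp (2 * Real.pi * Complex.I * x.val / p))
    (χ : (Fin n → F) → (Fin d → F) → (Fin d → (Fin n → F) × F) → ℂ)
    (hχ : ∀ y c a, χ y c a =
      e (Algebra.trace (ZMod p) F (∑ i, c i * ((∑ j, y j * (a i).1 j) + (a i).2))))
    (V : Finset (Fin d → (Fin n → F) × F)) :
    ∑ y : Fin n → F, ∑ c ∈ Finset.univ.filter (fun c : Fin d → F => c ≠ 0),
        ‖∑ a ∈ V, (starRingEnd ℂ) (χ y c a)‖ ^ 2 / (Fintype.card F : ℝ) ^ (d * (n + 1))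
      ≤ (V.card / (Fintype.card F : ℝ) ^ ((d - 1) * n)) *
          (1 - 1 / (Fintype.card F : ℝ)
            + V.card * ((Fintype.card F : ℝ) ^ (d - 1) - 1) / (Fintype.card F : ℝ) ^ d) :=
  stmt_11_general p n d hd e he χ hχ V
end

section
/- (Main incidence bound, case d = 1.) Let P ⊆ F_q^{n+1} be a set of points and let V be a set of varieties of the form V_a = {(x, h(x) + Σ_j a_j x_j^{b_j} + a_{n+1}) : x ∈ F_q^n} for a ∈ F_q^{n+1}, where h ∈ F_q[x_1,...,x_n] is fixed of degree at most q−1 and gcd(b_j, q−1)=1 for all j. Then |I(P,V) − |P||V|/q| ≤ q^{n/2}(1 − 1/q)√(|P||V|), where I(P,V) = #{(p, W) ∈ P × V : p ∈ W}. -/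
/-!
Substituting `u_j = x_j ^ b_j` (a bijection of `F_q`, as `gcd(b_j, q - 1) = 1`) and
`c = y - h(x)` turns a point `(x, y)` into `(u, c)`, and incidence with `V_a` into the affine
relation `c = a' ⬝ u + a_{n+1}`, so only point/affine-graph incidences in `F_q^{n+1}` remain.
With `e(p, a) = [p ∈ V_a] - 1/q` and `A` the set of parameters of `V`, the error term is
`∑_{p ∈ P, a ∈ A} e(p, a)`. The rows
`e(p, ·)` have squared norm `q^n (1 - 1/q)` and are pairwise non-positively correlated, and they
sum to zero along each fibre `a' = const`; hence the indicator of `A` may be replaced by its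
fibrewise-centred version, of squared norm at most `(1 - 1/q)|A|`, before applying Cauchy–Schwarz.
-/

open Finset Matrix

theorem sum_sq_sum_le_of_inner_nonpos {X Y : Type*} [Fintype Y] (g : X → Y → ℝ) (P : Finset X)
    {D : ℝ} (hdiag : ∀ x ∈ P, ∑ y, g x y ^ 2 ≤ D)
    (hoff : ∀ x ∈ P, ∀ x' ∈ P, x ≠ x' → ∑ y, g x y * g x' y ≤ 0) :
    ∑ y, (∑ x ∈ P, g x y) ^ 2 ≤ #P * D := by
  classical
  have hrow : ∀ x ∈ P, ∑ x' ∈ P, ∑ y, g x y * g x' y ≤ D := by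
    intro x hx
    rw [← add_sum_erase P _ hx]
    have hrest : ∑ x' ∈ P.erase x, ∑ y, g x y * g x' y ≤ 0 :=
      sum_nonpos fun x' hx' => hoff x hx x' (mem_of_mem_erase hx') (ne_of_mem_erase hx').symm
    linarith [hdiag x hx, show ∑ y, g x y * g x y = ∑ y, g x y ^ 2 by simp only [sq]]
  calc ∑ y, (∑ x ∈ P, g x y) ^ 2 = ∑ x ∈ P, ∑ x' ∈ P, ∑ y, g x y * g x' y := by
        simp only [sq, sum_mul_sum]
        rw [sum_comm]
        exact sum_congr rfl fun _ _ => sum_comm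
    _ ≤ ∑ _x ∈ P, D := sum_le_sum hrow
    _ = #P * D := by rw [sum_const, nsmul_eq_mul]

section FiberCentered

variable {B C : Type*} [Fintype B] [Fintype C] [DecidableEq B] [DecidableEq C]

theorem sum_indicator_sub_card_div_sq [Nonempty C] (s : Finset C) :
    ∑ c, ((if c ∈ s then 1 else 0) - (#s : ℝ) / Fintype.card C) ^ 2
      = #s - (#s : ℝ) ^ 2 / Fintype.card C := by
  have hC : (Fintype.card C : ℝ) ≠ 0 := Nat.cast_ne_zero.mpr Fintype.card_ne_zero
  have hexpand : ∀ c, ((if c ∈ s then 1 else 0) - (#s : ℝ) / Fintype.card C) ^ 2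
      = (1 - 2 * (#s : ℝ) / Fintype.card C) * (if c ∈ s then 1 else 0)
        + ((#s : ℝ) / Fintype.card C) ^ 2 := by
    intro c; split_ifs <;> ring
  simp only [hexpand, sum_add_distrib, ← mul_sum, sum_boole, sum_const, card_univ, nsmul_eq_mul,
    filter_mem_eq_inter, univ_inter]
  field_simp
  ring

noncomputable def fiberCentered (A : Finset (B × C)) (y : B × C) : ℝ :=
  (if y ∈ A then 1 else 0) - (#{c | (y.1, c) ∈ A} : ℝ) / Fintype.card C

theorem sum_fiberCentered_sq_le [Nonempty C] (A : Finset (B × C)) :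
    ∑ y, fiberCentered A y ^ 2 ≤ (1 - 1 / Fintype.card C) * #A := by
  have hfiber : ∀ b, ∑ c, fiberCentered A (b, c) ^ 2
      = #{c | (b, c) ∈ A} - (#{c | (b, c) ∈ A} : ℝ) ^ 2 / Fintype.card C := by
    intro b
    rw [← sum_indicator_sub_card_div_sq]
    simp [fiberCentered]
  have hcard : (#A : ℝ) = ∑ b, (#{c | (b, c) ∈ A} : ℝ) := by
    have := sum_boole (R := ℝ) (fun y : B × C => y ∈ A) univ
    rw [filter_mem_eq_inter, univ_inter] at this
    rw [← this, Fintype.sum_prod_type]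
    simp only [sum_boole]
  rw [Fintype.sum_prod_type, hcard, mul_sum]
  refine sum_le_sum fun b _ => ?_
  rw [hfiber]
  have hsq : (#{c | (b, c) ∈ A} : ℝ) ≤ (#{c | (b, c) ∈ A} : ℝ) ^ 2 := by
    exact_mod_cast Nat.le_self_pow two_ne_zero _
  rw [one_sub_mul, one_div_mul_eq_div]
  gcongr

theorem sum_mem_eq_sum_mul_fiberCentered (f : B × C → ℝ) (hf : ∀ b, ∑ c, f (b, c) = 0)
    (A : Finset (B × C)) : ∑ y ∈ A, f y = ∑ y, f y * fiberCentered A y := by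
  have hmean : ∑ y : B × C, f y * ((#{c | (y.1, c) ∈ A} : ℝ) / Fintype.card C) = 0 := by
    simp [Fintype.sum_prod_type, ← sum_mul, hf]
  simp only [fiberCentered, mul_sub, sum_sub_distrib, hmean, sub_zero, mul_ite, mul_one, mul_zero,
    sum_ite_mem, univ_inter]

end FiberCentered

theorem sq_sum_sum_le_of_fiber_sum_eq_zero {X B C : Type*} [Fintype B] [Fintype C] [DecidableEq B]
    [DecidableEq C] [Nonempty C] (e : X → B × C → ℝ) (P : Finset X) (A : Finset (B × C)) {D : ℝ}
    (hfiber : ∀ x b, ∑ c, e x (b, c) = 0) (hdiag : ∀ x ∈ P, ∑ y, e x y ^ 2 ≤ D)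
    (hoff : ∀ x ∈ P, ∀ x' ∈ P, x ≠ x' → ∑ y, e x y * e x' y ≤ 0) :
    (∑ x ∈ P, ∑ y ∈ A, e x y) ^ 2 ≤ #P * D * ((1 - 1 / Fintype.card C) * #A) := by
  set f : B × C → ℝ := fun y => ∑ x ∈ P, e x y
  have hf : ∀ b, ∑ c, f (b, c) = 0 := fun b => by
    rw [sum_comm]; exact sum_eq_zero fun x _ => hfiber x b
  have hfA : ∑ x ∈ P, ∑ y ∈ A, e x y = ∑ y, f y * fiberCentered A y := by
    rw [sum_comm]; exact sum_mem_eq_sum_mul_fiberCentered f hf A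
  have hf2 : ∑ y, f y ^ 2 ≤ #P * D := sum_sq_sum_le_of_inner_nonpos e P hdiag hoff
  rw [hfA]
  calc (∑ y, f y * fiberCentered A y) ^ 2
      ≤ (∑ y, f y ^ 2) * ∑ y, fiberCentered A y ^ 2 := sum_mul_sq_le_sq_mul_sq _ _ _
    _ ≤ #P * D * ((1 - 1 / Fintype.card C) * #A) :=
      mul_le_mul hf2 (sum_fiberCentered_sq_le A) (sum_nonneg fun _ _ => sq_nonneg _)
        ((sum_nonneg fun _ _ => sq_nonneg _).trans hf2)

theorem sum_indicator_sub_inv_mul {C : Type*} [Fintype C] [DecidableEq C] [Nonempty C] (s t : C) :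
    ∑ c, ((if c = s then 1 else 0) - 1 / (Fintype.card C : ℝ))
        * ((if c = t then 1 else 0) - 1 / (Fintype.card C : ℝ))
      = (if s = t then 1 else 0) - 1 / (Fintype.card C : ℝ) := by
  have hC : (Fintype.card C : ℝ) ≠ 0 := Nat.cast_ne_zero.mpr Fintype.card_ne_zero
  simp only [sub_mul, mul_sub, sum_sub_distrib, ite_mul, one_mul, zero_mul, mul_ite, mul_one,
    mul_zero, sum_ite_eq', mem_univ, if_true, sum_const, card_univ, nsmul_eq_mul]
  simp only [eq_comm (a := t)]
  field_simp
  ring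

section Affine

variable {F ι : Type*} [Field F] [Fintype F] [DecidableEq F] [Fintype ι]

noncomputable def incidenceDeviation (p a : (ι → F) × F) : ℝ :=
  (if p.2 = a.1 ⬝ᵥ p.1 + a.2 then 1 else 0) - 1 / Fintype.card F

theorem incidenceDeviation_eq (p a : (ι → F) × F) : incidenceDeviation p a
    = (if a.2 = p.2 - a.1 ⬝ᵥ p.1 then 1 else 0) - 1 / Fintype.card F := by
  simp only [incidenceDeviation, eq_sub_iff_add_eq, add_comm a.2, eq_comm]

theorem sum_incidenceDeviation_fiber (p : (ι → F) × F) (α : ι → F) :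
    ∑ β, incidenceDeviation p (α, β) = 0 := by
  simp [incidenceDeviation_eq, sum_sub_distrib]

variable [DecidableEq ι]

theorem card_mul_card_filter_dotProduct_eq {v : ι → F} (hv : v ≠ 0) (t : F) :
    Fintype.card F * #{α : ι → F | α ⬝ᵥ v = t} = Fintype.card F ^ Fintype.card ι := by
  let L : (ι → F) →+ F := AddMonoidHom.mk' (· ⬝ᵥ v) fun α β => add_dotProduct α β v
  obtain ⟨j, hj⟩ := Function.ne_iff.mp hv
  have hL : ∀ s, s ∈ Set.range L := fun s =>
    ⟨Pi.single j (s / v j), by simp [L, single_dotProduct, div_mul_cancel₀ _ hj]⟩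
  have hcard := card_eq_sum_card_fiberwise (s := univ) (t := univ) (f := L) fun _ _ => mem_univ _
  rw [sum_congr rfl fun s _ => AddMonoidHom.card_fiber_eq_of_mem_range L (hL s) (hL t), sum_const,
    card_univ, card_univ, Fintype.card_fun] at hcard
  exact hcard.symm

theorem sum_incidenceDeviation_mul (p p' : (ι → F) × F) :
    ∑ a, incidenceDeviation p a * incidenceDeviation p' a
      = #{α : ι → F | α ⬝ᵥ (p.1 - p'.1) = p.2 - p'.2}
        - (Fintype.card F : ℝ) ^ Fintype.card ι / Fintype.card F := by
  have hα : ∀ α : ι → F, (p.2 - α ⬝ᵥ p.1 = p'.2 - α ⬝ᵥ p'.1 ↔ α ⬝ᵥ (p.1 - p'.1) = p.2 - p'.2) := by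
    intro α; rw [dotProduct_sub]; constructor <;> intro h <;> linear_combination -h
  simp only [Fintype.sum_prod_type, incidenceDeviation_eq, sum_indicator_sub_inv_mul, hα,
    sum_sub_distrib, sum_boole, sum_const, card_univ, Fintype.card_fun, nsmul_eq_mul]
  push_cast
  ring

theorem sum_incidenceDeviation_sq (p : (ι → F) × F) :
    ∑ a, incidenceDeviation p a ^ 2
      = (Fintype.card F : ℝ) ^ Fintype.card ι * (1 - 1 / Fintype.card F) := by
  simp only [sq, sum_incidenceDeviation_mul, sub_self, dotProduct_zero, filter_true, card_univ,
    Fintype.card_fun]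
  push_cast
  ring

theorem sum_incidenceDeviation_mul_nonpos {p p' : (ι → F) × F} (hp : p ≠ p') :
    ∑ a, incidenceDeviation p a * incidenceDeviation p' a ≤ 0 := by
  have hF : (0 : ℝ) < Fintype.card F := Nat.cast_pos.mpr Fintype.card_pos
  rw [sum_incidenceDeviation_mul, sub_nonpos]
  by_cases h1 : p.1 = p'.1
  · have h2 : p.2 - p'.2 ≠ 0 := sub_ne_zero.mpr fun h2 => hp (Prod.ext h1 h2)
    simp only [h1, sub_self, dotProduct_zero, h2.symm, filter_false, card_empty, Nat.cast_zero]
    positivity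
  · have := card_mul_card_filter_dotProduct_eq (sub_ne_zero.mpr h1) (p.2 - p'.2)
    rw [le_div_iff₀ hF, mul_comm]
    exact_mod_cast this.le

theorem abs_card_affine_incidences_sub_le (P A : Finset ((ι → F) × F)) :
    |(#{x ∈ P ×ˢ A | x.1.2 = x.2.1 ⬝ᵥ x.1.1 + x.2.2} : ℝ) - #P * #A / Fintype.card F|
      ≤ √((Fintype.card F : ℝ) ^ Fintype.card ι) * (1 - 1 / Fintype.card F) * √(#P * #A) := by
  set q : ℝ := (Fintype.card F : ℝ)
  have hq : 0 ≤ 1 - 1 / q := by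
    rw [sub_nonneg, div_le_one (Nat.cast_pos.mpr Fintype.card_pos)]
    exact Nat.one_le_cast.mpr Fintype.card_pos
  have hsum : (#{x ∈ P ×ˢ A | x.1.2 = x.2.1 ⬝ᵥ x.1.1 + x.2.2} : ℝ) - #P * #A / q
      = ∑ p ∈ P, ∑ a ∈ A, incidenceDeviation p a := by
    simp only [card_filter, sum_product, incidenceDeviation, sum_sub_distrib, sum_const,
      nsmul_eq_mul]
    push_cast
    ring
  have hsq := sq_sum_sum_le_of_fiber_sum_eq_zero incidenceDeviation P A
    sum_incidenceDeviation_fiber (fun p _ => (sum_incidenceDeviation_sq p).le)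
    fun _ _ _ _ hp => sum_incidenceDeviation_mul_nonpos hp
  rw [hsum]
  refine (Real.abs_le_sqrt hsq).trans_eq ?_
  rw [show #P * (q ^ Fintype.card ι * (1 - 1 / q)) * ((1 - 1 / q) * #A)
      = q ^ Fintype.card ι * ((1 - 1 / q) * (1 - 1 / q) * (#P * #A)) by ring,
    Real.sqrt_mul (by positivity), Real.sqrt_mul (mul_self_nonneg _), Real.sqrt_mul_self hq,
    mul_assoc]

end Affine

theorem pow_injective_of_coprime_card_sub_one {F : Type*} [Field F] [Fintype F] {k : ℕ}
    (hk : k ≠ 0) (hc : k.Coprime (Fintype.card F - 1)) : Function.Injective fun x : F => x ^ k := by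
  classical
  have hcop : (Nat.card Fˣ).Coprime k := by
    rw [Nat.card_eq_fintype_card, Fintype.card_units]; exact hc.symm
  intro x y hxy
  simp only at hxy
  rcases eq_or_ne x 0 with rfl | hx
  · rw [zero_pow hk, eq_comm, pow_eq_zero_iff hk] at hxy
    exact hxy.symm
  rcases eq_or_ne y 0 with rfl | hy
  · rwa [zero_pow hk, pow_eq_zero_iff hk] at hxy
  have := (powCoprime hcop).injective (a₁ := Units.mk0 x hx) (a₂ := Units.mk0 y hy)
    (Units.ext (by simpa using hxy))
  simpa using congrArg Units.val this

theorem card_filter_product_image {X X' Y Y' : Type*} [DecidableEq X'] [DecidableEq Y']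
    {φ : X → X'} {ψ : Y → Y'} {P : Finset X} {A : Finset Y} (hφ : Set.InjOn φ P)
    (hψ : Set.InjOn ψ A) {R : X → Y → Prop} {R' : X' → Y' → Prop}
    [DecidablePred fun z : X × Y => R z.1 z.2] [DecidablePred fun z : X' × Y' => R' z.1 z.2]
    (hR : ∀ x ∈ P, ∀ y ∈ A, R' (φ x) (ψ y) ↔ R x y) :
    #{z ∈ P.image φ ×ˢ A.image ψ | R' z.1 z.2} = #{z ∈ P ×ˢ A | R z.1 z.2} := by
  rw [← prodMap_image_product, filter_image, card_image_of_injOn]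
  · congr 1
    refine filter_congr fun z hz => ?_
    rw [mem_product] at hz
    exact hR z.1 hz.1 z.2 hz.2
  · intro z hz z' hz' hzz
    simp only [coe_filter, mem_product, Set.mem_ofPred_eq] at hz hz'
    obtain ⟨h1, h2⟩ := Prod.ext_iff.mp hzz
    exact Prod.ext (hφ hz.1.1 hz'.1.1 h1) (hψ hz.1.2 hz'.1.2 h2)

theorem natCard_incidences_eq {X : Type*} (P : Finset X) (𝒱 : Finset (Set X))
    [DecidablePred fun z : X × Set X => z.1 ∈ z.2] :
    Nat.card {z : X × Set X // z.1 ∈ P ∧ z.2 ∈ 𝒱 ∧ z.1 ∈ z.2} = #{z ∈ P ×ˢ 𝒱 | z.1 ∈ z.2} := by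
  rw [← Nat.card_eq_finsetCard]
  exact Nat.card_congr (Equiv.subtypeEquivRight fun z => by simp [and_assoc])

theorem stmt_13_general {F : Type*} [Field F] [Fintype F] (n : ℕ)
    (h : MvPolynomial (Fin n) F)
    (b : Fin n → ℕ) (hb : ∀ j, 0 < b j ∧ Nat.Coprime (b j) (Fintype.card F - 1))
    (P : Finset ((Fin n → F) × F))
    (𝒱 : Finset (Set ((Fin n → F) × F)))
    (h𝒱 : ∀ W ∈ 𝒱, ∃ a : (Fin n → F) × F,
      W = {pt : (Fin n → F) × F | pt.2 =
        MvPolynomial.eval pt.1 h + (∑ j, a.1 j * pt.1 j ^ (b j)) + a.2}) :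
    |(Nat.card {x : ((Fin n → F) × F) × Set ((Fin n → F) × F) //
        x.1 ∈ P ∧ x.2 ∈ 𝒱 ∧ x.1 ∈ x.2} : ℝ)
      - P.card * 𝒱.card / (Fintype.card F : ℝ)|
      ≤ Real.sqrt ((Fintype.card F : ℝ) ^ n) * (1 - 1 / (Fintype.card F : ℝ))
        * Real.sqrt (P.card * 𝒱.card) := by
  classical
  choose! a ha using h𝒱
  let φ : (Fin n → F) × F → (Fin n → F) × F :=
    fun p => (fun j => p.1 j ^ b j, p.2 - MvPolynomial.eval p.1 h)
  have hφ : Function.Injective φ := by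
    intro p p' hpp
    simp only [φ, Prod.ext_iff, funext_iff] at hpp
    have h1 : p.1 = p'.1 := funext fun j =>
      pow_injective_of_coprime_card_sub_one (hb j).1.ne' (hb j).2 (hpp.1 j)
    exact Prod.ext h1 (by simpa [h1] using hpp.2)
  have hψ : Set.InjOn a 𝒱 := fun W hW W' hW' haa => by rw [ha W hW, ha W' hW', haa]
  have hinc : ∀ p ∈ P, ∀ W ∈ 𝒱, ((φ p).2 = (a W).1 ⬝ᵥ (φ p).1 + (a W).2 ↔ p ∈ W) := by
    intro p _ W hW
    conv_rhs => rw [ha W hW, Set.mem_ofPred_eq]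
    rw [dotProduct, sub_eq_iff_eq_add', add_assoc]
  have := abs_card_affine_incidences_sub_le (P.image φ) (𝒱.image a)
  rwa [card_filter_product_image (R' := fun u a => u.2 = a.1 ⬝ᵥ u.1 + a.2) hφ.injOn hψ hinc,
    card_image_of_injective _ hφ, card_image_of_injOn hψ, Fintype.card_fin,
    ← natCard_incidences_eq] at this

/-- Main incidence bound, case `d = 1`:
`|I(P,V) − |P||V|/q| ≤ q^{n/2}(1 − 1/q)√(|P||V|)` for a point set `P ⊆ F_q^{n+1}` and a
set `V` of varieties of the form `V_a = {(x, h(x) + Σ_j a_j x_j^{b_j} + a_{n+1})}`. -/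
theorem stmt_13 {F : Type*} [Field F] [Fintype F] (n : ℕ) (hn : 1 ≤ n)
    (h : MvPolynomial (Fin n) F) (hdeg : h.totalDegree ≤ Fintype.card F - 1)
    (b : Fin n → ℕ) (hb : ∀ j, 0 < b j ∧ Nat.Coprime (b j) (Fintype.card F - 1))
    (P : Finset ((Fin n → F) × F))
    (𝒱 : Finset (Set ((Fin n → F) × F)))
    (h𝒱 : ∀ W ∈ 𝒱, ∃ a : (Fin n → F) × F,
      W = {pt : (Fin n → F) × F | pt.2 =
        MvPolynomial.eval pt.1 h + (∑ j, a.1 j * pt.1 j ^ (b j)) + a.2}) :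
    |(Nat.card {x : ((Fin n → F) × F) × Set ((Fin n → F) × F) //
        x.1 ∈ P ∧ x.2 ∈ 𝒱 ∧ x.1 ∈ x.2} : ℝ)
      - P.card * 𝒱.card / (Fintype.card F : ℝ)|
      ≤ Real.sqrt ((Fintype.card F : ℝ) ^ n) * (1 - 1 / (Fintype.card F : ℝ))
        * Real.sqrt (P.card * 𝒱.card) :=
  stmt_13_general n h b hb P 𝒱 h𝒱
end

section
/- (Point–flat incidence bound for flats of special form, d = 1.) Let P ⊆ F_q^{n+1} and let F be a set of hyperplanes of the form F_a = {(x_1,...,x_{n+1}) : x_{n+1} = Σ_{j=1}^n a_j x_j + a_{n+1}}, a ∈ F_q^{n+1}. Then |I(P,F) − |P||F|/q| ≤ q^{n/2}(1 − 1/q)√(|P||F|). -/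
/-!
Index the hyperplanes by their parameters `a = (w, c)` and put `h(p, a) = 1[p ∈ F_a] - 1/q`,
so that `I(P, F) - |P||F|/q = ∑_{p ∈ P, a ∈ A} h(p, a)`. Each vertical line `{x} × F_q` meets
each `F_a` once, and for fixed `w` each point lies on exactly one `F_(w, c)`; hence `h` sums to
zero along the fibres `{x} × F_q` in either variable, and the indicators of `P` and `A` may be
replaced by their fibre-centred versions `f` and `g`, of squared norms at most `|P|(1 - 1/q)` and
`|A|(1 - 1/q)`. Since `∑_a h(p, a) h(p', a) = q^n (δ_{p p'} - δ_{x x'} / q)`, the operator with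
kernel `h` multiplies norms of fibre-centred functions by exactly `q^{n/2}`, and Cauchy–Schwarz
applied to `∑_a g(a) ∑_p f(p) h(p, a)` gives the bound.
-/

open Finset Function

section FiberCenter

variable {α K : Type*} [Fintype α] [DecidableEq α] [Fintype K] [DecidableEq K]

noncomputable def fiberCenter (S : Finset (α × K)) (p : α × K) : ℝ :=
  (if p ∈ S then 1 else 0) - #{s ∈ S | s.1 = p.1} / (Fintype.card K : ℝ)

omit [Fintype α] in
lemma sum_indicator_fiber (S : Finset (α × K)) (x : α) :
    ∑ y, (if (x, y) ∈ S then 1 else 0 : ℝ) = #{s ∈ S | s.1 = x} := by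
  rw [sum_boole]
  congr 1
  refine card_nbij' (fun y => (x, y)) Prod.snd ?_ ?_ ?_ ?_ <;> intro p <;> aesop

omit [Fintype α] in
lemma sum_fiberCenter_fiber_eq_zero (S : Finset (α × K)) (x : α) :
    ∑ y, fiberCenter S (x, y) = 0 := by
  rcases isEmpty_or_nonempty K with _ | _
  · simp
  simp only [fiberCenter, sum_sub_distrib, sum_indicator_fiber, sum_const, card_univ,
    nsmul_eq_mul]
  field_simp
  ring

lemma sum_fiberCenter_mul (S : Finset (α × K)) (k : α × K → ℝ)
    (hk : ∀ x, ∑ y, k (x, y) = 0) : ∑ p, fiberCenter S p * k p = ∑ p ∈ S, k p := by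
  simp only [fiberCenter, sub_mul, sum_sub_distrib, ite_mul, one_mul, zero_mul, sum_ite_mem,
    univ_inter, Fintype.sum_prod_type, div_mul_eq_mul_div, ← sum_div, ← mul_sum, hk, mul_zero,
    zero_div, sum_const_zero, sub_zero]

omit [Fintype α] in
lemma sum_fiberCenter_fiber_sq_le (S : Finset (α × K)) (x : α) :
    ∑ y, fiberCenter S (x, y) ^ 2 ≤ #{s ∈ S | s.1 = x} * (1 - 1 / (Fintype.card K : ℝ)) := by
  rcases isEmpty_or_nonempty K with _ | _
  · simp
  set N : ℕ := #{s ∈ S | s.1 = x}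
  have hNsq : (N : ℝ) ≤ N ^ 2 := by exact_mod_cast Nat.le_self_pow two_ne_zero N
  have expand : ∀ y, fiberCenter S (x, y) ^ 2
      = (if (x, y) ∈ S then 1 else 0 : ℝ) * (1 - 2 * N / Fintype.card K)
        + N ^ 2 / (Fintype.card K : ℝ) ^ 2 := by
    intro y; simp only [fiberCenter]; split_ifs <;> ring
  simp only [expand, sum_add_distrib, ← sum_mul, sum_indicator_fiber, sum_const, card_univ,
    nsmul_eq_mul]
  have hq : (0 : ℝ) < Fintype.card K := by exact_mod_cast Fintype.card_pos
  rw [← sub_nonneg]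
  have : (N : ℝ) * (1 - 1 / Fintype.card K) - (N * (1 - 2 * N / Fintype.card K)
      + Fintype.card K * (N ^ 2 / Fintype.card K ^ 2)) = (N ^ 2 - N) / Fintype.card K := by
    field_simp; ring
  rw [this]
  exact div_nonneg (by linarith) hq.le

lemma sum_fiberCenter_sq_le (S : Finset (α × K)) :
    ∑ p, fiberCenter S p ^ 2 ≤ #S * (1 - 1 / (Fintype.card K : ℝ)) := by
  calc ∑ p, fiberCenter S p ^ 2
      ≤ ∑ x, (#{s ∈ S | s.1 = x} : ℝ) * (1 - 1 / (Fintype.card K : ℝ)) := by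
        rw [Fintype.sum_prod_type]
        exact sum_le_sum fun x _ => sum_fiberCenter_fiber_sq_le S x
    _ = #S * (1 - 1 / (Fintype.card K : ℝ)) := by
        rw [← sum_mul, card_eq_sum_card_fiberwise (fun s _ => mem_univ s.1), Nat.cast_sum]

end FiberCenter

lemma sum_sq_sum_mul {α β R : Type*} [Fintype β] [CommSemiring R] (s : Finset α)
    (f : α → R) (h : α → β → R) :
    ∑ b, (∑ a ∈ s, f a * h a b) ^ 2 = ∑ a ∈ s, f a * ∑ a' ∈ s, f a' * ∑ b, h a b * h a' b := by
  simp_rw [sq, sum_mul_sum, mul_sum]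
  rw [sum_comm]
  refine sum_congr rfl fun a _ => ?_
  rw [sum_comm]
  refine sum_congr rfl fun a' _ => sum_congr rfl fun b _ => by ring

lemma AddMonoidHom.card_mul_card_fiber {G M : Type*} [AddGroup G] [Fintype G] [AddGroup M]
    [Fintype M] [DecidableEq M] (f : G →+ M) (hf : Surjective f) (m : M) :
    Fintype.card M * #{g | f g = m} = Fintype.card G := by
  calc Fintype.card M * #{g | f g = m} = ∑ m' : M, #{g | f g = m'} := by
        rw [sum_congr rfl fun m' _ => card_fiber_eq_of_mem_range f (hf m') (hf m), sum_const,
          card_univ, smul_eq_mul]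
    _ = Fintype.card G := (card_eq_sum_card_fiberwise fun g _ => mem_univ (f g)).symm

lemma sum_centered_indicator_mul {K : Type*} [Fintype K] [DecidableEq K] (t t' : K) :
    ∑ c, ((if c = t then 1 else 0) - 1 / (Fintype.card K : ℝ))
        * ((if c = t' then 1 else 0) - 1 / (Fintype.card K : ℝ))
      = (if t = t' then 1 else 0) - 1 / (Fintype.card K : ℝ) := by
  have hq : (Fintype.card K : ℝ) ≠ 0 := by
    have : Nonempty K := ⟨t⟩
    positivity
  simp only [sub_mul, mul_sub, sum_sub_distrib, ite_mul, one_mul, zero_mul, mul_ite, mul_one,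
    mul_zero, sum_ite_eq', mem_univ, if_true, sum_const, card_univ, nsmul_eq_mul]
  rw [if_congr eq_comm rfl rfl]
  field_simp
  ring

section GraphHyperplane

variable {ι K : Type*} [Fintype ι] [DecidableEq ι] [Field K] [Fintype K] [DecidableEq K]

lemma card_mul_card_dotProduct_eq {d : ι → K} (hd : d ≠ 0) (b : K) :
    Fintype.card K * #{w | w ⬝ᵥ d = b} = Fintype.card K ^ Fintype.card ι := by
  obtain ⟨i, hi⟩ := Function.ne_iff.mp hd
  let L : (ι → K) →+ K := AddMonoidHom.mk' (· ⬝ᵥ d) fun v w => add_dotProduct v w d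
  have hL : Surjective L := fun c => ⟨Pi.single i (c / d i), by
    simp [L, single_dotProduct, div_mul_cancel₀ _ hi]⟩
  rw [← Fintype.card_fun]
  exact L.card_mul_card_fiber hL b

def graphHyperplane (a : (ι → K) × K) : Set ((ι → K) × K) :=
  {pt | pt.2 = a.1 ⬝ᵥ pt.1 + a.2}

instance (a : (ι → K) × K) : DecidablePred (· ∈ graphHyperplane a) :=
  fun p => inferInstanceAs (Decidable (p.2 = a.1 ⬝ᵥ p.1 + a.2))

omit [DecidableEq ι] [Fintype K] [DecidableEq K] in
lemma mem_graphHyperplane {p a : (ι → K) × K} :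
    p ∈ graphHyperplane a ↔ p.2 = a.1 ⬝ᵥ p.1 + a.2 :=
  Iff.rfl

noncomputable def centeredIncidence (p a : (ι → K) × K) : ℝ :=
  (if p ∈ graphHyperplane a then 1 else 0) - 1 / (Fintype.card K : ℝ)

lemma sum_centeredIncidence_mul_centeredIncidence (p p' : (ι → K) × K) :
    ∑ a, centeredIncidence p a * centeredIncidence p' a
      = (Fintype.card K : ℝ) ^ Fintype.card ι
        * ((if p = p' then 1 else 0) - (if p.1 = p'.1 then 1 else 0) / Fintype.card K) := by
  have hq : (Fintype.card K : ℝ) ≠ 0 := Nat.cast_ne_zero.mpr Fintype.card_ne_zero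
  have hsolve_c : ∀ (q : (ι → K) × K) w c, q.2 = w ⬝ᵥ q.1 + c ↔ c = q.2 - w ⬝ᵥ q.1 := by
    intro q w c
    rw [eq_sub_iff_add_eq, add_comm, eq_comm]
  have hsolve_w : ∀ w : ι → K,
      p.2 - w ⬝ᵥ p.1 = p'.2 - w ⬝ᵥ p'.1 ↔ w ⬝ᵥ (p.1 - p'.1) = p.2 - p'.2 := by
    intro w
    rw [dotProduct_sub, sub_eq_sub_iff_sub_eq_sub, eq_comm]
  simp only [centeredIncidence, mem_graphHyperplane, Fintype.sum_prod_type, hsolve_c,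
    sum_centered_indicator_mul, hsolve_w, sum_sub_distrib, sum_boole, sum_const, card_univ,
    nsmul_eq_mul, Fintype.card_fun]
  by_cases hx : p.1 = p'.1
  · have hp : p = p' ↔ p.2 = p'.2 := by rw [Prod.ext_iff]; simp [hx]
    have h0 : (0 = p.2 - p'.2) ↔ p.2 = p'.2 := by rw [eq_comm, sub_eq_zero]
    simp only [hx, sub_self, dotProduct_zero, hp, h0, if_pos]
    by_cases hy : p.2 = p'.2
    · simp only [hy, filter_true, card_univ, Fintype.card_fun, if_true]
      push_cast
      ring
    · simp only [hy, filter_false, card_empty, if_false]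
      push_cast
      ring
  · have hcount : (Fintype.card K : ℝ) * #{w : ι → K | w ⬝ᵥ (p.1 - p'.1) = p.2 - p'.2}
        = (Fintype.card K : ℝ) ^ Fintype.card ι := by
      exact_mod_cast card_mul_card_dotProduct_eq (sub_ne_zero.mpr hx) (p.2 - p'.2)
    rw [if_neg fun h : p = p' => hx (h ▸ rfl), if_neg hx]
    push_cast
    field_simp
    linarith

omit [DecidableEq ι] in
lemma sum_centeredIncidence_point_fiber_eq_zero (x : ι → K) (a : (ι → K) × K) :
    ∑ y, centeredIncidence (x, y) a = 0 := by
  have hq : (Fintype.card K : ℝ) ≠ 0 := Nat.cast_ne_zero.mpr Fintype.card_ne_zero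
  simp only [centeredIncidence, mem_graphHyperplane, sum_sub_distrib, sum_ite_eq', mem_univ,
    if_true, sum_const, card_univ, nsmul_eq_mul]
  field_simp
  ring

omit [DecidableEq ι] in
lemma sum_centeredIncidence_param_fiber_eq_zero (p : (ι → K) × K) (w : ι → K) :
    ∑ c, centeredIncidence p (w, c) = 0 := by
  have hq : (Fintype.card K : ℝ) ≠ 0 := Nat.cast_ne_zero.mpr Fintype.card_ne_zero
  have hsolve : ∀ c, p.2 = w ⬝ᵥ p.1 + c ↔ c = p.2 - w ⬝ᵥ p.1 := fun c => by
    rw [eq_sub_iff_add_eq, add_comm, eq_comm]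
  simp only [centeredIncidence, mem_graphHyperplane, hsolve, sum_sub_distrib, sum_ite_eq',
    mem_univ, if_true, sum_const, card_univ, nsmul_eq_mul]
  field_simp
  ring

lemma sum_sq_sum_mul_centeredIncidence (f : (ι → K) × K → ℝ) (hf : ∀ x, ∑ y, f (x, y) = 0) :
    ∑ a, (∑ p, f p * centeredIncidence p a) ^ 2
      = (Fintype.card K : ℝ) ^ Fintype.card ι * ∑ p, f p ^ 2 := by
  set Q := (Fintype.card K : ℝ) ^ Fintype.card ι
  have hrow : ∀ p : (ι → K) × K,
      ∑ p', f p' * ∑ a, centeredIncidence p a * centeredIncidence p' a = Q * f p := by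
    intro p
    have hfiber : ∑ p' : (ι → K) × K, (if p.1 = p'.1 then f p' else 0) = 0 := by
      rw [Fintype.sum_prod_type, sum_comm]
      simp only [sum_ite_eq, mem_univ, if_true]
      exact hf p.1
    have hexpand : ∀ p', f p' * ∑ a, centeredIncidence p a * centeredIncidence p' a
        = Q * ((if p = p' then f p' else 0)
          - (if p.1 = p'.1 then f p' else 0) / Fintype.card K) := by
      intro p'
      rw [sum_centeredIncidence_mul_centeredIncidence]
      split_ifs <;> ring
    simp only [hexpand, ← mul_sum, sum_sub_distrib, ← sum_div, sum_ite_eq, mem_univ, if_true,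
      hfiber, zero_div, sub_zero]
  rw [sum_sq_sum_mul]
  simp only [hrow, mul_left_comm _ Q, ← mul_sum, sq]

omit [DecidableEq ι] in
lemma sum_sum_centeredIncidence (P A : Finset ((ι → K) × K)) :
    ∑ p ∈ P, ∑ a ∈ A, centeredIncidence p a
      = #{x ∈ P ×ˢ A | x.1 ∈ graphHyperplane x.2} - #P * #A / (Fintype.card K : ℝ) := by
  rw [card_filter, sum_product]
  simp only [centeredIncidence, sum_sub_distrib, sum_const, nsmul_eq_mul, Nat.cast_sum]
  push_cast
  ring

theorem abs_sum_sum_centeredIncidence_le (P A : Finset ((ι → K) × K)) :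
    |∑ p ∈ P, ∑ a ∈ A, centeredIncidence p a|
      ≤ √((Fintype.card K : ℝ) ^ Fintype.card ι) * (1 - 1 / Fintype.card K) * √(#P * #A) := by
  set q := (Fintype.card K : ℝ)
  have hq : 1 ≤ q := Nat.one_le_cast.mpr Fintype.card_pos
  have h1q : 0 ≤ 1 - 1 / q := by
    rw [sub_nonneg]
    exact div_le_one_of_le₀ hq (by positivity)
  have hD : ∑ p ∈ P, ∑ a ∈ A, centeredIncidence p a
      = ∑ a, fiberCenter A a * ∑ p, fiberCenter P p * centeredIncidence p a := by
    have hP : ∀ a, ∑ p, fiberCenter P p * centeredIncidence p a = ∑ p ∈ P, centeredIncidence p a :=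
      fun a => sum_fiberCenter_mul P (centeredIncidence · a) fun x =>
        sum_centeredIncidence_point_fiber_eq_zero x a
    simp only [hP]
    rw [sum_comm, sum_fiberCenter_mul A]
    intro w
    rw [sum_comm]
    exact sum_eq_zero fun p _ => sum_centeredIncidence_param_fiber_eq_zero p w
  have hsq : (∑ p ∈ P, ∑ a ∈ A, centeredIncidence p a) ^ 2
      ≤ q ^ Fintype.card ι * (1 - 1 / q) ^ 2 * (#P * #A) := by
    rw [hD]
    calc _ ≤ (∑ a, fiberCenter A a ^ 2)
            * ∑ a, (∑ p, fiberCenter P p * centeredIncidence p a) ^ 2 :=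
          sum_mul_sq_le_sq_mul_sq _ _ _
      _ = (∑ a, fiberCenter A a ^ 2) * (q ^ Fintype.card ι * ∑ p, fiberCenter P p ^ 2) := by
          rw [sum_sq_sum_mul_centeredIncidence _ (sum_fiberCenter_fiber_eq_zero P)]
      _ ≤ (#A * (1 - 1 / q)) * (q ^ Fintype.card ι * (#P * (1 - 1 / q))) := by
          gcongr
          · exact sum_fiberCenter_sq_le A
          · exact sum_fiberCenter_sq_le P
      _ = q ^ Fintype.card ι * (1 - 1 / q) ^ 2 * (#P * #A) := by ring
  rw [← Real.sqrt_sq h1q, ← Real.sqrt_mul (by positivity), ← Real.sqrt_mul (by positivity)]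
  exact Real.abs_le_sqrt hsq

omit [Fintype K] [DecidableEq K] in
lemma graphHyperplane_injective :
    Injective (graphHyperplane : (ι → K) × K → Set ((ι → K) × K)) := by
  intro a a' h
  have hval : ∀ x : ι → K, a.1 ⬝ᵥ x + a.2 = a'.1 ⬝ᵥ x + a'.2 := by
    intro x
    have hx : (x, a.1 ⬝ᵥ x + a.2) ∈ graphHyperplane a' := h ▸ rfl
    exact hx
  have h2 : a.2 = a'.2 := by simpa using hval 0
  refine Prod.ext (funext fun i => ?_) h2
  simpa [dotProduct_single, h2] using hval (Pi.single i 1)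

end GraphHyperplane

lemma natCard_incidences_eq_card_filter_preimage {α β : Type*} (P : Finset α)
    (ℱ : Finset (Set α)) {e : β → Set α} (he : Injective e) (hℱ : ∀ W ∈ ℱ, W ∈ Set.range e)
    [DecidablePred fun x : α × β => x.1 ∈ e x.2] :
    Nat.card {x : α × Set α // x.1 ∈ P ∧ x.2 ∈ ℱ ∧ x.1 ∈ x.2}
      = #{x ∈ P ×ˢ ℱ.preimage e he.injOn | x.1 ∈ e x.2} := by
  rw [← Nat.card_eq_finsetCard]
  symm
  refine Nat.card_eq_of_bijective (fun y => ⟨(y.1.1, e y.1.2), ?_⟩) ⟨?_, ?_⟩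
  · obtain ⟨y, hy⟩ := y
    simp only [mem_filter, mem_product, mem_preimage] at hy
    exact ⟨hy.1.1, hy.1.2, hy.2⟩
  · rintro ⟨⟨p, a⟩, _⟩ ⟨⟨p', a'⟩, _⟩ h
    simp only [Subtype.mk.injEq, Prod.mk.injEq] at h
    simp [h.1, he h.2]
  · rintro ⟨⟨p, W⟩, hp, hW, hpW⟩
    obtain ⟨a, rfl⟩ := hℱ W hW
    exact ⟨⟨(p, a), by simp [hp, hW, hpW]⟩, rfl⟩

theorem stmt_15_general {K : Type*} [Field K] [Fintype K] (n : ℕ)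
    (P : Finset ((Fin n → K) × K))
    (ℱ : Finset (Set ((Fin n → K) × K)))
    (hℱ : ∀ W ∈ ℱ, ∃ a : (Fin n → K) × K,
      W = {pt : (Fin n → K) × K | pt.2 = (∑ j, a.1 j * pt.1 j) + a.2}) :
    |(Nat.card {x : ((Fin n → K) × K) × Set ((Fin n → K) × K) //
        x.1 ∈ P ∧ x.2 ∈ ℱ ∧ x.1 ∈ x.2} : ℝ)
      - P.card * ℱ.card / (Fintype.card K : ℝ)|
      ≤ Real.sqrt ((Fintype.card K : ℝ) ^ n) * (1 - 1 / (Fintype.card K : ℝ))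
        * Real.sqrt (P.card * ℱ.card) := by
  classical
  have hrange : ∀ W ∈ ℱ, W ∈ Set.range graphHyperplane :=
    fun W hW => (hℱ W hW).imp fun a ha => ha.symm
  have hinj := graphHyperplane_injective (ι := Fin n) (K := K)
  have hcard : #(ℱ.preimage graphHyperplane hinj.injOn) = #ℱ := by
    rw [card_preimage, filter_true_of_mem hrange]
  rw [natCard_incidences_eq_card_filter_preimage P ℱ hinj hrange, ← hcard,
    ← sum_sum_centeredIncidence]
  simpa using abs_sum_sum_centeredIncidence_le P (ℱ.preimage graphHyperplane hinj.injOn)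

/-- Point–hyperplane incidence bound for hyperplanes of graph form (`d = 1`):
`|I(P,F) − |P||F|/q| ≤ q^{n/2}(1 − 1/q)√(|P||F|)` where `F` is a set of hyperplanes
`F_a = {(x, Σ_j a_j x_j + a_{n+1})}` in `F_q^{n+1}`. -/
theorem stmt_15 {K : Type*} [Field K] [Fintype K] (n : ℕ) (hn : 1 ≤ n)
    (P : Finset ((Fin n → K) × K))
    (ℱ : Finset (Set ((Fin n → K) × K)))
    (hℱ : ∀ W ∈ ℱ, ∃ a : (Fin n → K) × K,
      W = {pt : (Fin n → K) × K | pt.2 = (∑ j, a.1 j * pt.1 j) + a.2}) :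
    |(Nat.card {x : ((Fin n → K) × K) × Set ((Fin n → K) × K) //
        x.1 ∈ P ∧ x.2 ∈ ℱ ∧ x.1 ∈ x.2} : ℝ)
      - P.card * ℱ.card / (Fintype.card K : ℝ)|
      ≤ Real.sqrt ((Fintype.card K : ℝ) ^ n) * (1 - 1 / (Fintype.card K : ℝ))
        * Real.sqrt (P.card * ℱ.card) :=
  stmt_15_general n P ℱ hℱ
end
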